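/- arXiv:2405.03909 — 2 statements merged into one kernel-verified Lean document; each statement's English description precedes it below -/
import Mathlib

section
/- For the three-species nonlinearities f₁(u) = r₁(1 − u₁ − a₁u₃), f₂(u) = r₂(1 − u₂ − a₂u₃), f₃(u) = r₃(−1 + b₁u₁ + b₂u₂ − γu₃) with r₁, r₂, r₃, a₁, a₂, b₁, b₂ > 0 and γ ≥ 0, choosing σ₁ = 1/r₁, σ₂ = a₁b₂/(r₂a₂b₁), σ₃ = a₁/(r₃b₁), one has for all u, φ ∈ ℝ³: Σᵢ σᵢ(uᵢ − φᵢ)(fᵢ(u) − fᵢ(φ)) = −(u₁ − φ₁)² − (a₁b₂/(a₂b₁))(u₂ − φ₂)² − γ(a₁/b₁)(u₃ − φ₃)² ≤ 0. -/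
/-- Entropy dissipation identity for the two-prey one-predator system:
with `σ₁ = 1/r₁`, `σ₂ = a₁b₂/(r₂a₂b₁)`, `σ₃ = a₁/(r₃b₁)`, the weighted
interaction term equals a negative semidefinite quadratic form. -/
theorem two_prey_one_predator_dissipation (r₁ r₂ r₃ a₁ a₂ b₁ b₂ γ : ℝ)
    (hr₁ : 0 < r₁) (hr₂ : 0 < r₂) (hr₃ : 0 < r₃)
    (ha₁ : 0 < a₁) (ha₂ : 0 < a₂) (hb₁ : 0 < b₁) (hb₂ : 0 < b₂) (hγ : 0 ≤ γ)
    (u₁ u₂ u₃ φ₁ φ₂ φ₃ : ℝ) :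
    (1 / r₁) * (u₁ - φ₁) *
        (r₁ * (1 - u₁ - a₁ * u₃) - r₁ * (1 - φ₁ - a₁ * φ₃)) +
      (a₁ * b₂ / (r₂ * a₂ * b₁)) * (u₂ - φ₂) *
        (r₂ * (1 - u₂ - a₂ * u₃) - r₂ * (1 - φ₂ - a₂ * φ₃)) +
      (a₁ / (r₃ * b₁)) * (u₃ - φ₃) *
        (r₃ * (-1 + b₁ * u₁ + b₂ * u₂ - γ * u₃) -
          r₃ * (-1 + b₁ * φ₁ + b₂ * φ₂ - γ * φ₃)) =
      -(u₁ - φ₁) ^ 2 - (a₁ * b₂ / (a₂ * b₁)) * (u₂ - φ₂) ^ 2 -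
        γ * (a₁ / b₁) * (u₃ - φ₃) ^ 2 ∧
    (1 / r₁) * (u₁ - φ₁) *
        (r₁ * (1 - u₁ - a₁ * u₃) - r₁ * (1 - φ₁ - a₁ * φ₃)) +
      (a₁ * b₂ / (r₂ * a₂ * b₁)) * (u₂ - φ₂) *
        (r₂ * (1 - u₂ - a₂ * u₃) - r₂ * (1 - φ₂ - a₂ * φ₃)) +
      (a₁ / (r₃ * b₁)) * (u₃ - φ₃) *
        (r₃ * (-1 + b₁ * u₁ + b₂ * u₂ - γ * u₃) -
          r₃ * (-1 + b₁ * φ₁ + b₂ * φ₂ - γ * φ₃)) ≤ 0 := by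
  have e : (1 / r₁) * (u₁ - φ₁) *
        (r₁ * (1 - u₁ - a₁ * u₃) - r₁ * (1 - φ₁ - a₁ * φ₃)) +
      (a₁ * b₂ / (r₂ * a₂ * b₁)) * (u₂ - φ₂) *
        (r₂ * (1 - u₂ - a₂ * u₃) - r₂ * (1 - φ₂ - a₂ * φ₃)) +
      (a₁ / (r₃ * b₁)) * (u₃ - φ₃) *
        (r₃ * (-1 + b₁ * u₁ + b₂ * u₂ - γ * u₃) -
          r₃ * (-1 + b₁ * φ₁ + b₂ * φ₂ - γ * φ₃)) =
      -(u₁ - φ₁) ^ 2 - (a₁ * b₂ / (a₂ * b₁)) * (u₂ - φ₂) ^ 2 -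
        γ * (a₁ / b₁) * (u₃ - φ₃) ^ 2 := by
    field_simp
    ring
  refine ⟨e, ?_⟩
  rw [e]
  have h1 : (0:ℝ) ≤ (u₁ - φ₁) ^ 2 := sq_nonneg _
  have h2 : (0:ℝ) ≤ (a₁ * b₂ / (a₂ * b₁)) * (u₂ - φ₂) ^ 2 :=
    mul_nonneg (by positivity) (sq_nonneg _)
  have h3 : (0:ℝ) ≤ γ * (a₁ / b₁) * (u₃ - φ₃) ^ 2 :=
    mul_nonneg (mul_nonneg hγ (by positivity)) (sq_nonneg _)
  linarith
end

section
/- For the three-species nonlinearities f₁(u) = r₁(−1 − u₁ − hu₂ + bu₃), f₂(u) = r₂(−1 − ku₁ − u₂ + bu₃), f₃(u) = r₃(1 − au₁ − au₂ − u₃), with r₁, r₂, r₃ > 0, b > 1, 0 < a, and 0 < h, k < 1, there exist positive weights σ₁, σ₂, σ₃ such that Σᵢ σᵢ(uᵢ − φᵢ)(fᵢ(u) − fᵢ(φ)) ≤ 0 for all u, φ ∈ [0, b−1] × [0, b−1] × [0, 1]. -/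
/-- For the two-predator one-prey system there exist positive weights `σᵢ`
making the entropy production nonpositive on the invariant box
`[0,b−1] × [0,b−1] × [0,1]`. -/
theorem two_predator_one_prey_dissipation (r₁ r₂ r₃ a b h k : ℝ)
    (hr₁ : 0 < r₁) (hr₂ : 0 < r₂) (hr₃ : 0 < r₃)
    (hb : 1 < b) (ha : 0 < a) (hh : 0 < h) (hh1 : h < 1) (hk : 0 < k) (hk1 : k < 1) :
    ∃ σ₁ σ₂ σ₃ : ℝ, 0 < σ₁ ∧ 0 < σ₂ ∧ 0 < σ₃ ∧
      ∀ u₁ u₂ u₃ φ₁ φ₂ φ₃ : ℝ,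
        u₁ ∈ Set.Icc 0 (b - 1) → u₂ ∈ Set.Icc 0 (b - 1) → u₃ ∈ Set.Icc (0:ℝ) 1 →
        φ₁ ∈ Set.Icc 0 (b - 1) → φ₂ ∈ Set.Icc 0 (b - 1) → φ₃ ∈ Set.Icc (0:ℝ) 1 →
        σ₁ * (u₁ - φ₁) *
            (r₁ * (-1 - u₁ - h * u₂ + b * u₃) - r₁ * (-1 - φ₁ - h * φ₂ + b * φ₃)) +
          σ₂ * (u₂ - φ₂) *
            (r₂ * (-1 - k * u₁ - u₂ + b * u₃) - r₂ * (-1 - k * φ₁ - φ₂ + b * φ₃)) +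
          σ₃ * (u₃ - φ₃) *
            (r₃ * (1 - a * u₁ - a * u₂ - u₃) - r₃ * (1 - a * φ₁ - a * φ₂ - φ₃)) ≤ 0 := by
  refine ⟨a / r₁, a / r₂, b / r₃, by positivity, by positivity, by positivity,
    fun u₁ u₂ u₃ φ₁ φ₂ φ₃ _ _ _ _ _ _ => ?_⟩
  have h1 : a / r₁ * r₁ = a := div_mul_cancel₀ a hr₁.ne'
  have h2 : a / r₂ * r₂ = a := div_mul_cancel₀ a hr₂.ne'
  have h3 : b / r₃ * r₃ = b := div_mul_cancel₀ b hr₃.ne'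
  set x := u₁ - φ₁
  set y := u₂ - φ₂
  set z := u₃ - φ₃
  have key : a / r₁ * x * (r₁ * (-1 - u₁ - h * u₂ + b * u₃) - r₁ * (-1 - φ₁ - h * φ₂ + b * φ₃)) +
      a / r₂ * y * (r₂ * (-1 - k * u₁ - u₂ + b * u₃) - r₂ * (-1 - k * φ₁ - φ₂ + b * φ₃)) +
      b / r₃ * z * (r₃ * (1 - a * u₁ - a * u₂ - u₃) - r₃ * (1 - a * φ₁ - a * φ₂ - φ₃)) =
      a * (-(x^2) - y^2 - (h + k) * (x * y)) - b * z^2 := by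
    simp only [x, y, z]
    field_simp
    ring
  rw [key]
  have hz : 0 ≤ b * z ^ 2 := by positivity
  nlinarith [sq_nonneg (x + y), sq_nonneg (x - y), mul_pos ha (mul_pos hh hk),
    mul_nonneg ha.le (sq_nonneg (x + y)), mul_nonneg ha.le (sq_nonneg (x - y)),
    mul_nonneg (mul_nonneg ha.le (sub_pos.mpr hh1).le) (sq_nonneg (x - y)),
    mul_nonneg (mul_nonneg ha.le (sub_pos.mpr hk1).le) (sq_nonneg (x - y))]
end
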